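/- arXiv:2008.00738 — 4 statements merged into one kernel-verified Lean document; each statement's English description precedes it below -/
import Mathlib

section
/- Let n ≥ 1 and let T : ℤⁿ×ℤⁿ → ℤⁿ be translation equivariant and monotone in the sense of Knothe. Suppose f, g, h, k : ℤⁿ → [0,∞) satisfy f(x)·g(y) ≤ h(T(x,y))·k(x+y−T(x,y)) for all x, y ∈ ℤⁿ. Then (∑_{x∈ℤⁿ} f(x))·(∑_{x∈ℤⁿ} g(x)) ≤ (∑_{x∈ℤⁿ} h(x))·(∑_{x∈ℤⁿ} k(x)), where the sums are taken in the extended nonnegative reals [0,∞]. -/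
open scoped BigOperators ENNReal NNReal

/-- A *total additive ordering* on an abelian group `G`: a linear order (given as
a relation `r`, meaning `r a b ↔ a ⪯ b`) compatible with addition. -/
def TotalAdditiveOrdering {G : Type*} [AddCommGroup G] (r : G → G → Prop) : Prop :=
  (∀ a, r a a) ∧ (∀ a b, r a b → r b a → a = b) ∧
  (∀ a b c, r a b → r b c → r a c) ∧ (∀ a b, r a b ∨ r b a) ∧
  (∀ a b c, r a b → r (a + c) (b + c))

/-- `u` is the minimal positive element of the ordering `r`, i.e. the minimum of
`{g : 0 ≺ g}`. -/
def IsMinimalPositive {G : Type*} [AddCommGroup G] (r : G → G → Prop) (u : G) : Prop :=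
  (r 0 u ∧ u ≠ 0) ∧ ∀ g, r 0 g → g ≠ 0 → r u g

/-- `T` is translation equivariant: `T (x+z) (y+z) = T x y + z`. -/
def TranslationEquivariant {G : Type*} [AddCommGroup G] (T : G → G → G) : Prop :=
  ∀ x y z, T (x + z) (y + z) = T x y + z

/-- `T : ℤⁿ × ℤⁿ → ℤⁿ` is triangular and monotone with respect to the decomposition
`ℤⁿ = G₁ × ⋯ × G_k` (encoded by the additive equivalence `e`, with `Gᵢ = ℤ^(ℓ i)`) and the
orderings `ord i` on the blocks: (i) the `i`-th block of `T x y` depends only on the blocks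
`≤ i` of `x` and `y`; (ii) fixing the blocks `< i`, the `i`-th block of `T` is nondecreasing
in the `i`-th blocks of both arguments. -/
def KnotheWith {n k : ℕ} (ℓ : Fin k → ℕ)
    (e : (Fin n → ℤ) ≃+ ((i : Fin k) → Fin (ℓ i) → ℤ))
    (ord : (i : Fin k) → (Fin (ℓ i) → ℤ) → (Fin (ℓ i) → ℤ) → Prop)
    (T : (Fin n → ℤ) → (Fin n → ℤ) → (Fin n → ℤ)) : Prop :=
  (∀ (i : Fin k) (x y x' y' : Fin n → ℤ),
      (∀ j, j ≤ i → e x j = e x' j ∧ e y j = e y' j) →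
      e (T x y) i = e (T x' y') i) ∧
  (∀ (i : Fin k) (x y x' y' : Fin n → ℤ),
      (∀ j, j < i → e x j = e x' j ∧ e y j = e y' j) →
      ord i (e x i) (e x' i) → ord i (e y i) (e y' i) →
      ord i (e (T x y) i) (e (T x' y') i))

/-- `T` is monotone in the sense of Knothe: there is a decomposition
`ℤⁿ = G₁ × ⋯ × G_k` with `Gᵢ = ℤ^(ℓᵢ)`, `ℓ₁ + ⋯ + ℓ_k = n`, together with total additive
orderings on the `Gᵢ`, each admitting a minimal positive element, with respect to which `T`
is triangular and monotone. -/
def KnotheMonotone {n : ℕ} (T : (Fin n → ℤ) → (Fin n → ℤ) → (Fin n → ℤ)) : Prop :=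
  ∃ (k : ℕ) (_ : 1 ≤ k) (ℓ : Fin k → ℕ) (_ : ∑ i, ℓ i = n)
    (e : (Fin n → ℤ) ≃+ ((i : Fin k) → Fin (ℓ i) → ℤ))
    (ord : (i : Fin k) → (Fin (ℓ i) → ℤ) → (Fin (ℓ i) → ℤ) → Prop),
    (∀ i, TotalAdditiveOrdering (ord i) ∧ ∃ u, IsMinimalPositive (ord i) u) ∧
    KnotheWith ℓ e ord T

/-!
By Fubini, the inequality for a triangular map on `G₁ × ⋯ × G_k` follows from the inequality for
its first block and for each fibre map on the remaining blocks, so it suffices to treat a single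
linearly ordered group, where `T` is monotone and translation equivariant. There we sum along the
fibres `x + y = w`: with `c x = f x * g (w - x)` and `H t = h t * k (w - t)`, the hypothesis at
`(x, w - x')` and `(x', w - x)` gives `c x * c x' ≤ H (T x (w - x')) * H (T x' (w - x))`.
Pairing the least with the greatest point of a finite set, then the next two, and so on, yields
strictly nested and hence distinct image points, so every product of `c` over a set is dominated
by a product of `H` over an equinumerous set. Weak log-majorization implies weak majorization
(by `log x ≤ x - 1` and summation by parts), which gives `∑ₓ c x ≤ ∑ₜ H t` on every fibre.
-/

open Finset

theorem Real.sub_le_mul_sub_log {a b : ℝ} (ha : 0 < a) (hb : 0 < b) :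
    a - b ≤ a * (Real.log a - Real.log b) := by
  have h := mul_le_mul_of_nonneg_left (Real.one_sub_inv_le_log_of_pos (div_pos ha hb)) ha.le
  rwa [Real.log_div ha.ne' hb.ne', inv_div, mul_sub, mul_one, mul_div_cancel₀ _ ha.ne'] at h

theorem sum_range_le_sum_range_of_prod_range_le {a b : ℕ → ℝ} {n : ℕ}
    (ha : ∀ i < n, 0 < a i) (hb : ∀ i < n, 0 < b i) (hanti : AntitoneOn a (Set.Iio n))
    (hprod : ∀ r ≤ n, ∏ i ∈ range r, a i ≤ ∏ i ∈ range r, b i) :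
    ∑ i ∈ range n, a i ≤ ∑ i ∈ range n, b i := by
  set d : ℕ → ℝ := fun i => Real.log (a i) - Real.log (b i)
  have hD : ∀ r ≤ n, ∑ i ∈ range r, d i ≤ 0 := fun r hr => by
    have hlt : ∀ i ∈ range r, i < n := fun i hi => (mem_range.1 hi).trans_le hr
    rw [sum_sub_distrib, ← Real.log_prod fun i hi => (ha i (hlt i hi)).ne',
      ← Real.log_prod fun i hi => (hb i (hlt i hi)).ne', sub_nonpos]
    exact Real.log_le_log (prod_pos fun i hi => ha i (hlt i hi)) (hprod r hr)
  have habel : ∑ i ∈ range n, a i * d i ≤ 0 := by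
    rcases Nat.eq_zero_or_pos n with rfl | hn
    · simp
    simp_rw [← smul_eq_mul]
    rw [sum_range_by_parts, sub_nonpos]
    refine (smul_nonpos_of_nonneg_of_nonpos (ha _ (by omega)).le (hD n le_rfl)).trans
      (sum_nonneg fun i hi => ?_)
    have hi : i + 1 < n := by have := mem_range.1 hi; omega
    exact smul_nonneg_of_nonpos_of_nonpos
      (sub_nonpos.2 (hanti (Set.mem_Iio.2 (by omega)) (Set.mem_Iio.2 hi) (by omega))) (hD _ hi.le)
  calc ∑ i ∈ range n, a i = ∑ i ∈ range n, (b i + (a i - b i)) := by simp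
    _ ≤ ∑ i ∈ range n, (b i + a i * d i) := sum_le_sum fun i hi => add_le_add le_rfl
        (Real.sub_le_mul_sub_log (ha i (mem_range.1 hi)) (hb i (mem_range.1 hi)))
    _ ≤ ∑ i ∈ range n, b i := by rw [sum_add_distrib]; linarith

theorem Finset.exists_bijOn_antitoneOn {α β : Type*} [Nonempty α] [LinearOrder β]
    (S : Finset α) (v : α → β) :
    ∃ e : ℕ → α, Set.BijOn e (Set.Iio #S) S ∧ AntitoneOn (v ∘ e) (Set.Iio #S) := by
  set g : Fin #S → α := fun i => S.equivFin.symm i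
  set σ := Tuple.sort fun i => OrderDual.toDual (v (g i))
  have hσ := Tuple.monotone_sort fun i => OrderDual.toDual (v (g i))
  have hg : g.Injective := fun i j hij => S.equivFin.symm.injective (Subtype.ext hij)
  let e : ℕ → α := fun i => if h : i < #S then g (σ ⟨i, h⟩) else Classical.arbitrary α
  have he : ∀ i (h : i < #S), e i = g (σ ⟨i, h⟩) := fun i h => dif_pos h
  refine ⟨e, ⟨fun i hi => ?_, fun i hi j hj hij => ?_, fun x hx => ?_⟩, fun i hi j hj hij => ?_⟩
  · rw [he i hi]; exact (S.equivFin.symm _).2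
  · rw [he i hi, he j hj] at hij
    exact Fin.mk.inj (σ.injective (hg hij))
  · refine ⟨σ.symm (S.equivFin ⟨x, hx⟩), Set.mem_Iio.2 (Fin.is_lt _), ?_⟩
    simp [he, g]
  · simp only [Function.comp_apply, he i hi, he j hj]
    exact hσ (show (⟨i, hi⟩ : Fin #S) ≤ ⟨j, hj⟩ from hij)

theorem Finset.sum_range_eq_of_bijOn {α M : Type*} [AddCommMonoid M] {S : Finset α}
    {e : ℕ → α} (he : Set.BijOn e (Set.Iio #S) S) (v : α → M) :
    ∑ i ∈ range #S, v (e i) = ∑ x ∈ S, v x :=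
  sum_nbij e (fun i hi => he.mapsTo (by simpa using hi)) (by simpa using he.injOn)
    (by simpa using he.surjOn) fun _ _ => rfl

theorem Finset.prod_le_prod_range_of_antitoneOn {α : Type*} {P Z : Finset α} {H : α → ℝ}
    (hH : ∀ z ∈ P, 0 ≤ H z) {p : ℕ → α} (hp : Set.BijOn p (Set.Iio #P) P)
    (hanti : AntitoneOn (H ∘ p) (Set.Iio #P)) (hZ : Z ⊆ P) :
    ∏ z ∈ Z, H z ≤ ∏ i ∈ range #Z, H (p i) := by
  classical
  induction Z using Finset.induction_on_min_value H with
  | empty => simp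
  | insert a s ha hmin ih =>
    -- some element of `insert a s` has rank at least `#s` in the enumeration `p`
    have hlt : #((range #s).image p) < #(insert a s) := by
      rw [card_insert_of_notMem ha]
      exact card_image_le.trans_lt (by simp)
    obtain ⟨z, hz, hz'⟩ := exists_mem_notMem_of_card_lt_card hlt
    obtain ⟨j, hj, rfl⟩ := hp.surjOn (hZ hz)
    have hsj : #s ≤ j := by
      by_contra! h
      exact hz' (mem_image_of_mem p (mem_range.2 h))
    have haj : H a ≤ H (p j) := by
      rcases mem_insert.1 hz with h | h
      · rw [h]
      · exact hmin _ h
    have hps : ∀ i ≤ #s, p i ∈ P := fun i hi =>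
      hp.mapsTo (Set.mem_Iio.2 (hi.trans_lt (hsj.trans_lt hj)))
    rw [prod_insert ha, card_insert_of_notMem ha, prod_range_succ, mul_comm]
    exact mul_le_mul (ih ((subset_insert a s).trans hZ))
      (haj.trans (hanti (Set.mem_Iio.2 (hsj.trans_lt hj)) hj hsj)) (hH a (hZ (mem_insert_self a s)))
      (prod_nonneg fun i hi => hH _ (hps i (mem_range.1 hi).le))

theorem Finset.sum_le_sum_of_forall_exists_prod_le {α ι : Type*} {X : Finset α} {P : Finset ι}
    {c : α → ℝ} {H : ι → ℝ}
    (hc : ∀ x ∈ X, 0 < c x) (hH : ∀ z ∈ P, 0 < H z)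
    (h : ∀ Y ⊆ X, ∃ Z ⊆ P, #Z = #Y ∧ ∏ y ∈ Y, c y ≤ ∏ z ∈ Z, H z) :
    ∑ x ∈ X, c x ≤ ∑ z ∈ P, H z := by
  classical
  rcases X.eq_empty_or_nonempty with rfl | ⟨x₀, hx₀⟩
  · simpa using sum_nonneg fun z hz => (hH z hz).le
  have hXP : #X ≤ #P := by
    obtain ⟨Z, hZ, hcard, -⟩ := h X subset_rfl
    exact hcard ▸ card_le_card hZ
  have : Nonempty α := ⟨x₀⟩
  have : Nonempty ι := by
    obtain ⟨z, -⟩ := card_pos.1 ((card_pos.2 ⟨x₀, hx₀⟩).trans_le hXP)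
    exact ⟨z⟩
  obtain ⟨e, he, he_anti⟩ := X.exists_bijOn_antitoneOn c
  obtain ⟨p, hp, hp_anti⟩ := P.exists_bijOn_antitoneOn H
  have hprod : ∀ r ≤ #X, ∏ i ∈ range r, c (e i) ≤ ∏ i ∈ range r, H (p i) := fun r hr => by
    have hinj : Set.InjOn e (range r) := he.injOn.mono (by simpa using Set.Iio_subset_Iio hr)
    obtain ⟨Z, hZ, hcard, hle⟩ := h ((range r).image e) fun _ hy => by
      obtain ⟨i, hi, rfl⟩ := mem_image.1 hy
      exact he.mapsTo (Set.mem_Iio.2 ((mem_range.1 hi).trans_le hr))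
    rw [prod_image hinj] at hle
    rw [card_image_of_injOn hinj, card_range] at hcard
    exact hcard ▸ hle.trans
      (prod_le_prod_range_of_antitoneOn (fun z hz => (hH z hz).le) hp hp_anti hZ)
  calc ∑ x ∈ X, c x = ∑ i ∈ range #X, c (e i) := (sum_range_eq_of_bijOn he c).symm
    _ ≤ ∑ i ∈ range #X, H (p i) :=
        sum_range_le_sum_range_of_prod_range_le (fun i hi => hc _ (he.mapsTo hi))
          (fun i hi => hH _ (hp.mapsTo (Set.mem_Iio.2 (hi.trans_le hXP)))) he_anti hprod
    _ ≤ ∑ i ∈ range #P, H (p i) := sum_le_sum_of_subset_of_nonneg (range_subset_range.2 hXP)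
        fun i hi _ => (hH _ (hp.mapsTo (Set.mem_Iio.2 (mem_range.1 hi)))).le
    _ = ∑ z ∈ P, H z := sum_range_eq_of_bijOn hp H

theorem ENNReal.sum_le_sum_of_forall_exists_prod_le {α ι : Type*} {X : Finset α}
    {P : Finset ι} {c : α → ℝ≥0∞} {H : ι → ℝ≥0∞}
    (h : ∀ Y ⊆ X, ∃ Z ⊆ P, #Z = #Y ∧ ∏ y ∈ Y, c y ≤ ∏ z ∈ Z, H z) :
    ∑ x ∈ X, c x ≤ ∑ z ∈ P, H z := by
  classical
  by_cases hP : ∃ z ∈ P, H z = ∞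
  · exact le_top.trans_eq (ENNReal.sum_eq_top.2 hP).symm
  push Not at hP
  rw [← sum_filter_ne_zero X, ← sum_filter_ne_zero P]
  set S := {x ∈ X | c x ≠ 0}
  set P' := {z ∈ P | H z ≠ 0}
  have h' : ∀ Y ⊆ S, ∃ Z ⊆ P', #Z = #Y ∧ ∏ y ∈ Y, c y ≤ ∏ z ∈ Z, H z := fun Y hY => by
    obtain ⟨Z, hZ, hcard, hle⟩ := h Y (hY.trans (filter_subset _ X))
    refine ⟨Z, fun z hz => mem_filter.2 ⟨hZ hz, fun hz0 => ?_⟩, hcard, hle⟩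
    rw [prod_eq_zero hz hz0, nonpos_iff_eq_zero, prod_eq_zero_iff] at hle
    obtain ⟨y, hy, hy0⟩ := hle
    exact (mem_filter.1 (hY hy)).2 hy0
  have hS : ∀ x ∈ S, c x ≠ ∞ := fun x hx => by
    obtain ⟨Z, hZ, -, hle⟩ := h' {x} (singleton_subset_iff.2 hx)
    exact ne_top_of_le_ne_top (prod_ne_top fun z hz => hP z (filter_subset _ P (hZ hz)))
      (by simpa using hle)
  have hP' : ∀ z ∈ P', H z ≠ ∞ := fun z hz => hP z (filter_subset _ P hz)
  have key := Finset.sum_le_sum_of_forall_exists_prod_le (X := S) (P := P')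
    (c := fun x => (c x).toReal) (H := fun z => (H z).toReal)
    (fun x hx => ENNReal.toReal_pos (mem_filter.1 hx).2 (hS x hx))
    (fun z hz => ENNReal.toReal_pos (mem_filter.1 hz).2 (hP' z hz)) fun Y hY => by
      obtain ⟨Z, hZ, hcard, hle⟩ := h' Y hY
      refine ⟨Z, hZ, hcard, ?_⟩
      simp only [← ENNReal.toReal_prod]
      exact ENNReal.toReal_mono (prod_ne_top fun z hz => hP' z (hZ hz)) hle
  rwa [← ENNReal.toReal_sum hS, ← ENNReal.toReal_sum hP',
    ENNReal.toReal_le_toReal (sum_ne_top.2 hS) (sum_ne_top.2 hP')] at key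

section Pairing

variable {β γ : Type*} [LinearOrder β] [Preorder γ] {ψ : β → β → γ}
  {c : β → ℝ≥0∞} {H : γ → ℝ≥0∞}

theorem card_pair_eq_and_prod_pair_le [DecidableEq γ]
    (hψ : ∀ ⦃a b c d⦄, a < b → c < d → ψ a d < ψ b c)
    (hcH : ∀ x y, x ≤ y → c x * c y ≤ H (ψ x y) * H (ψ y x)) {x y : β} (hxy : x ≤ y) :
    #{ψ x y, ψ y x} = #{x, y} ∧ ∏ t ∈ {x, y}, c t ≤ ∏ z ∈ {ψ x y, ψ y x}, H z := by
  rcases hxy.eq_or_lt with rfl | hlt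
  · refine ⟨by simp, ?_⟩
    simp only [insert_eq_of_mem (mem_singleton_self _), prod_singleton]
    exact le_of_not_gt fun h => (ENNReal.mul_lt_mul h h).not_ge (hcH x x le_rfl)
  · rw [card_pair (hψ hlt hlt).ne, card_pair hlt.ne, prod_pair hlt.ne, prod_pair (hψ hlt hlt).ne]
    exact ⟨rfl, hcH x y hxy⟩

-- The last conjunct is the induction invariant: the pairs formed inside an interval `(a, b)` have
-- images strictly between `ψ a b` and `ψ b a`, so they never collide with the outer pair.
theorem exists_pairing [DecidableEq γ] (hψ : ∀ ⦃a b c d⦄, a < b → c < d → ψ a d < ψ b c)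
    (hcH : ∀ x y, x ≤ y → c x * c y ≤ H (ψ x y) * H (ψ y x)) (Y : Finset β) :
    ∃ Z ⊆ (Y ×ˢ Y).image (Function.uncurry ψ), #Z = #Y ∧ ∏ y ∈ Y, c y ≤ ∏ z ∈ Z, H z ∧
      ∀ a b, (∀ y ∈ Y, a < y ∧ y < b) → ∀ z ∈ Z, ψ a b < z ∧ z < ψ b a := by
  induction Y using Finset.strongInduction with | _ Y ih
  rcases Y.eq_empty_or_nonempty with rfl | hY
  · exact ⟨∅, empty_subset _, rfl, by simp, by simp⟩
  set y₁ := Y.min' hY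
  set y₄ := Y.max' hY
  have hy₁ : y₁ ∈ Y := min'_mem Y hY
  have hy₄ : y₄ ∈ Y := max'_mem Y hY
  have h14 : y₁ ≤ y₄ := min'_le Y _ hy₄
  set Y' := Y \ {y₁, y₄}
  have hY' : ∀ y ∈ Y', y₁ < y ∧ y < y₄ := fun y hy => by
    obtain ⟨hyY, hy⟩ := mem_sdiff.1 hy
    simp only [mem_insert, mem_singleton, not_or] at hy
    exact ⟨(min'_le Y y hyY).lt_of_ne' hy.1, (le_max' Y y hyY).lt_of_ne hy.2⟩
  obtain ⟨Z', hZ', hcard', hprod', hbd'⟩ :=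
    ih Y' (sdiff_ssubset (insert_subset hy₁ (singleton_subset_iff.2 hy₄)) (by simp))
  obtain ⟨hcard, hprod⟩ := card_pair_eq_and_prod_pair_le hψ hcH h14
  have hdisj : Disjoint {ψ y₁ y₄, ψ y₄ y₁} Z' := by
    refine disjoint_left.2 fun z hz hzZ' => ?_
    obtain ⟨hlo, hhi⟩ := hbd' y₁ y₄ hY' z hzZ'
    rcases mem_insert.1 hz with rfl | hz
    · exact hlo.false
    · exact (mem_singleton.1 hz ▸ hhi).false
  have hYsplit : Y = {y₁, y₄} ∪ Y' := (union_sdiff_of_subset (insert_subset hy₁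
    (singleton_subset_iff.2 hy₄))).symm
  refine ⟨{ψ y₁ y₄, ψ y₄ y₁} ∪ Z', union_subset ?_ ?_, ?_, ?_, ?_⟩
  · exact insert_subset (mem_image.2 ⟨(y₁, y₄), mem_product.2 ⟨hy₁, hy₄⟩, rfl⟩)
      (singleton_subset_iff.2 (mem_image.2 ⟨(y₄, y₁), mem_product.2 ⟨hy₄, hy₁⟩, rfl⟩))
  · exact hZ'.trans (image_subset_image (product_subset_product sdiff_subset sdiff_subset))
  · rw [card_union_of_disjoint hdisj, hcard, hcard', ← card_union_of_disjoint disjoint_sdiff,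
      ← hYsplit]
  · rw [prod_union hdisj, hYsplit, prod_union disjoint_sdiff]
    exact mul_le_mul' hprod hprod'
  · intro a b hab z hz
    have hlo : ψ a b < ψ y₁ y₄ := hψ (hab y₁ hy₁).1 (hab y₄ hy₄).2
    have hhi : ψ y₄ y₁ < ψ b a := hψ (hab y₄ hy₄).2 (hab y₁ hy₁).1
    have hmid : ψ y₁ y₄ ≤ ψ y₄ y₁ := by
      rcases h14.eq_or_lt with h | h
      · rw [h]
      · exact (hψ h h).le
    rcases mem_union.1 hz with hz | hz
    · rcases mem_insert.1 hz with rfl | hz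
      · exact ⟨hlo, hmid.trans_lt hhi⟩
      · exact mem_singleton.1 hz ▸ ⟨hlo.trans_le hmid, hhi⟩
    · obtain ⟨h₁, h₂⟩ := hbd' y₁ y₄ hY' z hz
      exact ⟨hlo.trans h₁, h₂.trans hhi⟩

theorem ENNReal.tsum_le_tsum_of_pairing (hψ : ∀ ⦃a b c d⦄, a < b → c < d → ψ a d < ψ b c)
    (hcH : ∀ x y, x ≤ y → c x * c y ≤ H (ψ x y) * H (ψ y x)) : ∑' x, c x ≤ ∑' z, H z := by
  classical
  rw [ENNReal.tsum_eq_iSup_sum]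
  refine iSup_le fun X => (ENNReal.sum_le_sum_of_forall_exists_prod_le
    (P := (X ×ˢ X).image (Function.uncurry ψ)) fun Y hY => ?_).trans (ENNReal.sum_le_tsum _)
  obtain ⟨Z, hZ, hcard, hprod, -⟩ := exists_pairing hψ hcH Y
  exact ⟨Z, hZ.trans (image_subset_image (product_subset_product hY hY)), hcard, hprod⟩

end Pairing

def HasBrunnMinkowski {G : Type*} [AddCommGroup G] (T : G → G → G) : Prop :=
  ∀ f g h k : G → ℝ≥0∞, (∀ x y, f x * g y ≤ h (T x y) * k (x + y - T x y)) →
    (∑' x, f x) * (∑' x, g x) ≤ (∑' x, h x) * (∑' x, k x)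

theorem ENNReal.tsum_mul_tsum_eq_tsum_tsum_sub {G : Type*} [AddCommGroup G] (f g : G → ℝ≥0∞) :
    (∑' x, f x) * (∑' y, g y) = ∑' w, ∑' x, f x * g (w - x) := by
  rw [ENNReal.tsum_comm, ← ENNReal.tsum_mul_right]
  refine tsum_congr fun x => ?_
  rw [← ENNReal.tsum_mul_left]
  exact ((Equiv.subRight x).tsum_eq fun y => f x * g y).symm

section LinearOrder

variable {β : Type*} [AddCommGroup β] [LinearOrder β] [IsOrderedAddMonoid β] {T : β → β → β}

theorem TranslationEquivariant.lt_of_monotone (hTE : TranslationEquivariant T)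
    (hT : Monotone (Function.uncurry T)) {x x' y y' : β} (hx : x < x') (hy : y < y') :
    T x y < T x' y' := by
  set δ := min (x' - x) (y' - y)
  calc T x y < T x y + δ := lt_add_of_pos_right _ (lt_min (sub_pos.2 hx) (sub_pos.2 hy))
    _ = T (x + δ) (y + δ) := (hTE x y δ).symm
    _ ≤ T x' y' := hT (Prod.mk_le_mk.2
        ⟨le_sub_iff_add_le'.1 (min_le_left _ _), le_sub_iff_add_le'.1 (min_le_right _ _)⟩)

theorem HasBrunnMinkowski.of_monotone (hTE : TranslationEquivariant T)
    (hT : Monotone (Function.uncurry T)) : HasBrunnMinkowski T := by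
  intro f g h k hfg
  rw [ENNReal.tsum_mul_tsum_eq_tsum_tsum_sub, ENNReal.tsum_mul_tsum_eq_tsum_tsum_sub]
  refine ENNReal.tsum_le_tsum fun w => ENNReal.tsum_le_tsum_of_pairing
    (ψ := fun x x' => T x (w - x')) (fun a b c d hab hcd => hTE.lt_of_monotone hT hab
      (sub_lt_sub_left hcd w)) fun x x' _ => ?_
  have hshift : T x' (w - x) = T x (w - x') + (x' - x) := by
    rw [← hTE]
    congr 1 <;> abel
  have e₁ : x + (w - x') - T x (w - x') = w - T x' (w - x) := by rw [hshift]; abel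
  have e₂ : x' + (w - x) - T x' (w - x) = w - T x (w - x') := by rw [hshift]; abel
  calc f x * g (w - x) * (f x' * g (w - x')) = f x * g (w - x') * (f x' * g (w - x)) := by ring
    _ ≤ _ := mul_le_mul' (hfg _ _) (hfg _ _)
    _ = _ := by rw [e₁, e₂]; ring

end LinearOrder

section Constructions

variable {G G' A C : Type*} [AddCommGroup G] [AddCommGroup G'] [AddCommGroup A] [AddCommGroup C]

theorem TranslationEquivariant.addEquiv_conj {T : G → G → G} (hT : TranslationEquivariant T)
    (e : G ≃+ G') : TranslationEquivariant fun x y => e (T (e.symm x) (e.symm y)) :=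
  fun x y z => by dsimp only; rw [map_add, map_add, hT, map_add, AddEquiv.apply_symm_apply]

theorem HasBrunnMinkowski.of_addEquiv {T : G → G → G} (e : G ≃+ G')
    (hT : HasBrunnMinkowski fun x y => e (T (e.symm x) (e.symm y))) : HasBrunnMinkowski T := by
  intro f g h k hfg
  have hsum (φ : G → ℝ≥0∞) : ∑' x, φ x = ∑' x, φ (e.symm x) := (e.symm.toEquiv.tsum_eq φ).symm
  rw [hsum f, hsum g, hsum h, hsum k]
  exact hT _ _ _ _ fun x y => by simpa using hfg (e.symm x) (e.symm y)

theorem HasBrunnMinkowski.of_subsingleton [Subsingleton G] (T : G → G → G) :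
    HasBrunnMinkowski T := by
  intro f g h k hfg
  simp only [tsum_eq_single (0 : G) fun x hx => absurd (Subsingleton.elim x 0) hx]
  simpa [Subsingleton.elim (T 0 0) 0] using hfg 0 0

theorem TranslationEquivariant.fst {T : A × C → A × C → A × C} (hT : TranslationEquivariant T)
    {T₀ : A → A → A} (h₀ : ∀ p q, (T p q).1 = T₀ p.1 q.1) : TranslationEquivariant T₀ :=
  fun a b z => by simpa [h₀] using congrArg Prod.fst (hT (a, 0) (b, 0) (z, 0))

theorem TranslationEquivariant.snd {T : A × C → A × C → A × C} (hT : TranslationEquivariant T)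
    (a b : A) : TranslationEquivariant fun x y : C => (T (a, x) (b, y)).2 :=
  fun x y z => by simpa using congrArg Prod.snd (hT (a, x) (b, y) (0, z))

theorem HasBrunnMinkowski.prod {T : A × C → A × C → A × C} {T₀ : A → A → A}
    (h₀ : HasBrunnMinkowski T₀) (hT₀ : ∀ p q, (T p q).1 = T₀ p.1 q.1)
    (hfib : ∀ a b, HasBrunnMinkowski fun x y : C => (T (a, x) (b, y)).2) :
    HasBrunnMinkowski T := by
  intro f g h k hfg
  simp only [ENNReal.tsum_prod']
  refine h₀ _ _ (fun a => ∑' z, h (a, z)) (fun a => ∑' z, k (a, z)) fun a b =>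
    hfib a b _ _ _ _ fun x y => ?_
  have hfg' := hfg (a, x) (b, y)
  rw [show T (a, x) (b, y) = (T₀ a b, (T (a, x) (b, y)).2) from Prod.ext (hT₀ _ _) rfl] at hfg'
  simpa only [Prod.mk_add_mk, Prod.mk_sub_mk] using hfg'

end Constructions

noncomputable abbrev TotalAdditiveOrdering.toLinearOrder {G : Type*} [AddCommGroup G]
    {r : G → G → Prop} (hr : TotalAdditiveOrdering r) : LinearOrder G where
  le := r
  le_refl := hr.1
  le_antisymm := hr.2.1
  le_trans := hr.2.2.1
  le_total := hr.2.2.2.1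
  toDecidableLE := Classical.decRel _

theorem TotalAdditiveOrdering.isOrderedAddMonoid {G : Type*} [AddCommGroup G]
    {r : G → G → Prop} (hr : TotalAdditiveOrdering r) :
    @IsOrderedAddMonoid G _ hr.toLinearOrder.toPartialOrder.toPreorder := by
  let := hr.toLinearOrder
  exact { add_le_add_left := fun a b hab c => hr.2.2.2.2 a b c hab }

def IsTriangularMonotone {k : ℕ} {B : Fin k → Type*} (ord : ∀ i, B i → B i → Prop)
    (T : (∀ i, B i) → (∀ i, B i) → ∀ i, B i) : Prop :=
  (∀ i x y x' y', (∀ j ≤ i, x j = x' j ∧ y j = y' j) → T x y i = T x' y' i) ∧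
  (∀ i x y x' y', (∀ j < i, x j = x' j ∧ y j = y' j) →
    ord i (x i) (x' i) → ord i (y i) (y' i) → ord i (T x y i) (T x' y' i))

namespace IsTriangularMonotone

variable {m : ℕ} {B : Fin (m + 1) → Type*} {ord : ∀ i, B i → B i → Prop}
  {T : (∀ i, B i) → (∀ i, B i) → ∀ i, B i}

theorem apply_zero_eq (hT : IsTriangularMonotone ord T) {x y x' y' : ∀ i, B i}
    (hx : x 0 = x' 0) (hy : y 0 = y' 0) : T x y 0 = T x' y' 0 :=
  hT.1 0 x y x' y' fun _ hj => Fin.le_zero_iff.1 hj ▸ ⟨hx, hy⟩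

theorem apply_zero_mono (hT : IsTriangularMonotone ord T) {x y x' y' : ∀ i, B i}
    (hx : ord 0 (x 0) (x' 0)) (hy : ord 0 (y 0) (y' 0)) : ord 0 (T x y 0) (T x' y' 0) :=
  hT.2 0 x y x' y' (fun j hj => absurd hj (Fin.not_lt_zero j)) hx hy

theorem tail (hT : IsTriangularMonotone ord T) (a b : B 0) :
    IsTriangularMonotone (fun i => ord i.succ)
      fun x y => Fin.tail (T (Fin.cons a x) (Fin.cons b y)) := by
  refine ⟨fun i x y x' y' h => hT.1 i.succ _ _ _ _ (Fin.forall_fin_succ.2 ⟨fun _ => ⟨rfl, rfl⟩,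
    fun j hj => by simpa using h j (Fin.succ_le_succ_iff.1 hj)⟩),
    fun i x y x' y' h hx hy => hT.2 i.succ _ _ _ _ (Fin.forall_fin_succ.2 ⟨fun _ => ⟨rfl, rfl⟩,
    fun j hj => by simpa using h j (Fin.succ_lt_succ_iff.1 hj)⟩) hx hy⟩

end IsTriangularMonotone

theorem HasBrunnMinkowski.of_isTriangularMonotone {k : ℕ} {B : Fin k → Type*}
    [∀ i, AddCommGroup (B i)] {ord : ∀ i, B i → B i → Prop}
    (hord : ∀ i, TotalAdditiveOrdering (ord i)) {T : (∀ i, B i) → (∀ i, B i) → ∀ i, B i}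
    (hTE : TranslationEquivariant T) (hT : IsTriangularMonotone ord T) : HasBrunnMinkowski T := by
  induction k with
  | zero => exact .of_subsingleton T
  | succ m ih =>
    let := (hord 0).toLinearOrder
    have := (hord 0).isOrderedAddMonoid
    set e := (Fin.consLinearEquiv ℤ B).toAddEquiv.symm
    have hTE' := hTE.addEquiv_conj e
    set T₀ : B 0 → B 0 → B 0 := fun a b => T (Fin.cons a 0) (Fin.cons b 0) 0
    have h₀ : ∀ p q, (e (T (e.symm p) (e.symm q))).1 = T₀ p.1 q.1 := fun p q =>
      hT.apply_zero_eq rfl rfl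
    exact .of_addEquiv e (.prod (.of_monotone (hTE'.fst h₀) fun p q hpq =>
      hT.apply_zero_mono hpq.1 hpq.2) h₀ fun a b =>
        ih (fun i => hord i.succ) (hTE'.snd a b) (hT.tail a b))

theorem KnotheWith.isTriangularMonotone {n k : ℕ} {ℓ : Fin k → ℕ}
    {e : (Fin n → ℤ) ≃+ ((i : Fin k) → Fin (ℓ i) → ℤ)}
    {ord : (i : Fin k) → (Fin (ℓ i) → ℤ) → (Fin (ℓ i) → ℤ) → Prop}
    {T : (Fin n → ℤ) → (Fin n → ℤ) → (Fin n → ℤ)} (hK : KnotheWith ℓ e ord T) :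
    IsTriangularMonotone ord fun a b => e (T (e.symm a) (e.symm b)) :=
  ⟨fun i a b a' b' h => hK.1 i _ _ _ _ (by simpa using h),
    fun i a b a' b' h ha hb => hK.2 i _ _ _ _ (by simpa using h) (by simpa using ha)
      (by simpa using hb)⟩

theorem discrete_brunn_minkowski_general {n : ℕ}
    (T : (Fin n → ℤ) → (Fin n → ℤ) → (Fin n → ℤ))
    (hTE : TranslationEquivariant T) (hT : KnotheMonotone T)
    (f g h k : (Fin n → ℤ) → ℝ≥0)
    (hyp : ∀ x y, f x * g y ≤ h (T x y) * k (x + y - T x y)) :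
    (∑' x, (f x : ℝ≥0∞)) * (∑' x, (g x : ℝ≥0∞)) ≤
      (∑' x, (h x : ℝ≥0∞)) * (∑' x, (k x : ℝ≥0∞)) := by
  obtain ⟨_, _, ℓ, _, e, ord, hord, hK⟩ := hT
  have hBM : HasBrunnMinkowski T := .of_addEquiv e
    (.of_isTriangularMonotone (fun i => (hord i).1) (hTE.addEquiv_conj e) hK.isTriangularMonotone)
  exact hBM _ _ _ _ fun x y => by exact_mod_cast hyp x y

/-- **Theorem 1.3 of Halikias–Klartag–Slomka.** Every translation equivariant operation
`T : ℤⁿ × ℤⁿ → ℤⁿ` which is monotone in the sense of Knothe admits a Brunn–Minkowski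
inequality. -/
theorem discrete_brunn_minkowski {n : ℕ} (hn : 1 ≤ n)
    (T : (Fin n → ℤ) → (Fin n → ℤ) → (Fin n → ℤ))
    (hTE : TranslationEquivariant T) (hT : KnotheMonotone T)
    (f g h k : (Fin n → ℤ) → ℝ≥0)
    (hyp : ∀ x y, f x * g y ≤ h (T x y) * k (x + y - T x y)) :
    (∑' x, (f x : ℝ≥0∞)) * (∑' x, (g x : ℝ≥0∞)) ≤
      (∑' x, (h x : ℝ≥0∞)) * (∑' x, (k x : ℝ≥0∞)) :=
  discrete_brunn_minkowski_general T hTE hT f g h k hyp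
end

section
/- Let μ₁ and μ₂ be finitely supported probability measures on ℤ, and let π be the monotone coupling of μ₁ and μ₂ with respect to the standard order on ℤ. Let μ₋ and μ₊ be the push-forwards of π by the maps T₋(x,y) = ⌊(x+y)/2⌋ and T₊(x,y) = ⌈(x+y)/2⌉ respectively. Then H(μ₁|m) + H(μ₂|m) ≥ H(μ₋|m) + H(μ₊|m). -/
open scoped BigOperators ENNReal NNReal

/-- A finitely supported probability measure on `A`, viewed as its density. -/
def IsPMF {A : Type*} (μ : A → ℝ) : Prop :=
  (∀ x, 0 ≤ μ x) ∧ (Function.support μ).Finite ∧ ∑ᶠ x, μ x = 1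

/-- Relative entropy `H(μ | m)` of a finitely supported probability measure with respect to
the counting measure `m`: `∑ₓ μ(x) log μ(x)` (note `Real.log 0 = 0`, so `0 · log 0 = 0`). -/
noncomputable def relEntropy {A : Type*} (μ : A → ℝ) : ℝ :=
  ∑ᶠ x, μ x * Real.log (μ x)

/-- Push-forward `π ∘ T⁻¹` of a (finitely supported) measure `π` by the map `T`. -/
noncomputable def pushforward {A B : Type*} (T : A → B) (π : A → ℝ) : B → ℝ :=
  fun z => ∑ᶠ p ∈ {p : A | T p = z}, π p

/-- Cumulative distribution function `F_μ(x) = μ {g : g ⪯ x}` of `μ` with respect to the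
ordering `r`. -/
noncomputable def cdf {A : Type*} (r : A → A → Prop) (μ : A → ℝ) (x : A) : ℝ :=
  ∑ᶠ g ∈ {g | r g x}, μ g

open Classical in
/-- Generalized inverse `F_μ⁻¹(t) = min {x : F_μ(x) ≥ t}`, the minimum taken with respect to
the ordering `r` (junk value `0` if the minimum does not exist). -/
noncomputable def genInv {A : Type*} [Zero A] (r : A → A → Prop) (μ : A → ℝ) (t : ℝ) : A :=
  if h : ∃ x, t ≤ cdf r μ x ∧ ∀ y, t ≤ cdf r μ y → r x y then h.choose else 0

/-- The monotone coupling of `μ` and `ν` with respect to the ordering `r`: the law of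
`(F_μ⁻¹(U), F_ν⁻¹(U))` where `U` is uniformly distributed on `(0,1)`. -/
noncomputable def monotoneCoupling {A : Type*} [Zero A] (r : A → A → Prop) (μ ν : A → ℝ) :
    A × A → ℝ := fun p =>
  (MeasureTheory.volume.restrict (Set.Ioo (0 : ℝ) 1)
    {t : ℝ | genInv r μ t = p.1 ∧ genInv r ν t = p.2}).toReal

/-!
The monotone coupling is the law of the pair of quantile functions `t ↦ (F₁⁻¹ t, F₂⁻¹ t)` of
the uniform distribution on `(0,1)`. Both are nondecreasing, so its support is a chain of
`ℤ × ℤ`: on it `s = x + y` is injective, and two points whose sums differ by one share a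
coordinate. Hence everything is a push-forward of the law `ν` of `s`: the measures `μ∓` by
`s ↦ ⌊s/2⌋, ⌈s/2⌉`, the marginals by the two coordinates of the point of sum `s`.

Add the atoms of `ν` in increasing order of `s`. Adding mass `b` to a fibre already carrying
`W` raises `∑ h(mass)`, `h(x) = x log x`, by `h(W + b) - h(W)`, which is nondecreasing in `W`
because `h` is convex. For a new atom `s`, the fibres of `⌊·/2⌋` and `⌈·/2⌉` already carry
`ν(s-1)` and `0` (in some order), while those of the two coordinates carry `0` or more and,
for one of them, at least `ν(s-1)`.
-/

open MeasureTheory Set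

theorem ConvexOn.map_add_sub_map_le {s : Set ℝ} {f : ℝ → ℝ} (hf : ConvexOn ℝ s f) {x y d : ℝ}
    (hx : x ∈ s) (hyd : y + d ∈ s) (hxy : x ≤ y) (hd : 0 ≤ d) :
    f (x + d) - f x ≤ f (y + d) - f y := by
  rcases (add_nonneg (sub_nonneg.2 hxy) hd).eq_or_lt with hL | hL
  · obtain ⟨rfl, rfl⟩ : y = x ∧ d = 0 := by constructor <;> linarith
    simp
  -- `x + d` and `y` are the convex combinations of `x` and `y + d` with swapped weights.
  set w := d / (y - x + d)
  have hw : 0 ≤ w := by positivity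
  have hw' : w ≤ 1 := (div_le_one hL).2 (by linarith)
  have h₁ := hf.2 hx hyd (sub_nonneg.2 hw') hw (sub_add_cancel 1 w)
  have h₂ := hf.2 hx hyd hw (sub_nonneg.2 hw') (add_sub_cancel w 1)
  have e₁ : (1 - w) * x + w * (y + d) = x + d := by simp only [w]; field_simp; ring
  have e₂ : w * x + (1 - w) * (y + d) = y := by simp only [w]; field_simp; ring
  simp only [smul_eq_mul, e₁, e₂] at h₁ h₂
  linarith

noncomputable def mulLogIncrement (b t : ℝ) : ℝ :=
  (t + b) * Real.log (t + b) - t * Real.log t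

theorem mulLogIncrement_mono {b s t : ℝ} (hb : 0 ≤ b) (hs : 0 ≤ s) (hst : s ≤ t) :
    mulLogIncrement b s ≤ mulLogIncrement b t :=
  Real.convexOn_mul_log.map_add_sub_map_le hs (by simp only [mem_Ici]; linarith) hst hb

section Entropy

variable {α β : Type*}

theorem relEntropy_coe_eq_sum (u : α →₀ ℝ) {s : Finset α} (hs : u.support ⊆ s) :
    relEntropy ⇑u = ∑ x ∈ s, u x * Real.log (u x) := by
  refine finsum_eq_sum_of_support_subset _ fun x hx => ?_
  exact hs (Finsupp.mem_support_iff.2 fun h => hx (by simp [h]))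

theorem relEntropy_single_add (z : α) (b : ℝ) (u : α →₀ ℝ) :
    relEntropy ⇑(Finsupp.single z b + u) = relEntropy ⇑u + mulLogIncrement b (u z) := by
  classical
  have hsub : (Finsupp.single z b + u).support ⊆ insert z u.support :=
    Finsupp.support_add.trans (Finset.union_subset
      (Finsupp.support_single_subset.trans (by simp)) (Finset.subset_insert _ _))
  rw [relEntropy_coe_eq_sum _ hsub, relEntropy_coe_eq_sum u (Finset.subset_insert z _),
    ← Finset.add_sum_erase _ _ (Finset.mem_insert_self _ _),
    ← Finset.add_sum_erase _ _ (Finset.mem_insert_self _ _)]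
  have hrest : ∀ x ∈ (insert z u.support).erase z, (Finsupp.single z b + u) x = u x := fun x hx => by
    simp [Ne.symm (Finset.ne_of_mem_erase hx)]
  rw [Finset.sum_congr rfl fun x hx => by rw [hrest x hx], mulLogIncrement]
  simp only [Finsupp.add_apply, Finsupp.single_eq_same, add_comm b (u z)]
  ring

theorem Finsupp.mapDomain_apply_eq_sum_filter {M : Type*} [AddCommMonoid M] [DecidableEq β]
    (f : α → β) (u : α →₀ M) (z : β) :
    u.mapDomain f z = ∑ p ∈ u.support with f p = z, u p := by
  simp [Finsupp.mapDomain, Finsupp.sum, Finsupp.single_apply, Finset.sum_ite]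

theorem pushforward_coe (f : α → β) (u : α →₀ ℝ) : pushforward f ⇑u = ⇑(u.mapDomain f) := by
  classical
  ext z
  rw [Finsupp.mapDomain_apply_eq_sum_filter, pushforward]
  refine finsum_mem_eq_sum_of_inter_support_eq _ ?_
  ext p
  simp [and_comm]

theorem Finsupp.mapDomain_apply_eq_sum_of_fiber {M : Type*} [AddCommMonoid M] [DecidableEq β]
    (f : α → β) (u : α →₀ M) {z : β} {t : Finset α} (ht : ∀ p ∈ t, f p = z) (hfiber : ∀ p ∈ u.support, f p = z → p ∈ t) :
    u.mapDomain f z = ∑ p ∈ t, u p := by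
  rw [Finsupp.mapDomain_apply_eq_sum_filter]
  refine Finset.sum_subset (fun p hp => ?_) fun p hpt hp => ?_
  · rw [Finset.mem_filter] at hp
    exact hfiber p hp.1 hp.2
  · exact Finsupp.notMem_support_iff.1 fun h => hp (Finset.mem_filter.2 ⟨h, ht p hpt⟩)

theorem Finsupp.mapDomain_apply_nonneg {u : α →₀ ℝ} (hu : ∀ p, 0 ≤ u p) (f : α → β) (z : β) :
    0 ≤ u.mapDomain f z := by
  classical
  rw [Finsupp.mapDomain_apply_eq_sum_filter]
  exact Finset.sum_nonneg fun p _ => hu p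

theorem Finsupp.le_mapDomain_apply {u : α →₀ ℝ} (hu : ∀ p, 0 ≤ u p) (f : α → β) (p : α) :
    u p ≤ u.mapDomain f (f p) := by
  classical
  by_cases hp : p ∈ u.support
  · rw [Finsupp.mapDomain_apply_eq_sum_filter]
    exact Finset.single_le_sum (fun q _ => hu q) (Finset.mem_filter.2 ⟨hp, rfl⟩)
  · rw [Finsupp.notMem_support_iff.1 hp]
    exact Finsupp.mapDomain_apply_nonneg hu f _

theorem mulLogIncrement_halves {u : ℤ →₀ ℝ} {a : ℤ} (hu : ∀ c ∈ u.support, c < a) (b : ℝ) :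
    mulLogIncrement b (u.mapDomain (· / 2) (a / 2)) +
        mulLogIncrement b (u.mapDomain (fun s => (s + 1) / 2) ((a + 1) / 2)) =
      mulLogIncrement b (u (a - 1)) + mulLogIncrement b 0 := by
  -- Below `a`, only `a - 1` can share a half with `a`, and it shares exactly one of the two.
  rcases Int.emod_two_eq_zero_or_one a with ha | ha
  · rw [Finsupp.mapDomain_apply_eq_sum_of_fiber _ _ (t := ∅) (by simp)
        fun p hp hpa => absurd (hu p hp) (by omega),
      Finsupp.mapDomain_apply_eq_sum_of_fiber _ _ (t := {a - 1}) (by simp; omega)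
        fun p hp hpa => by have := hu p hp; simp only [Finset.mem_singleton]; omega]
    simp [add_comm]
  · rw [Finsupp.mapDomain_apply_eq_sum_of_fiber _ _ (t := {a - 1}) (by simp; omega)
        fun p hp hpa => by have := hu p hp; simp only [Finset.mem_singleton]; omega,
      Finsupp.mapDomain_apply_eq_sum_of_fiber _ _ (t := ∅) (by simp)
        fun p hp hpa => absurd (hu p hp) (by omega)]
    simp

theorem relEntropy_mapDomain_halves_le (ν : ℤ →₀ ℝ) (hν : ∀ s, 0 ≤ ν s) (f : ℤ → α) (g : ℤ → β)
    (hfg : ∀ s, ν s ≠ 0 → ν (s + 1) ≠ 0 → f s = f (s + 1) ∨ g s = g (s + 1)) :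
    relEntropy ⇑(ν.mapDomain (· / 2)) + relEntropy ⇑(ν.mapDomain fun s => (s + 1) / 2) ≤
      relEntropy ⇑(ν.mapDomain f) + relEntropy ⇑(ν.mapDomain g) := by
  classical
  induction ν using Finsupp.induction_on_max with
  | zero => simp [relEntropy]
  | single_add a b u hlt hb ih =>
    have hua : u a = 0 := Finsupp.notMem_support_iff.1 fun h => (hlt a h).false
    have hagree : ∀ s, s ≠ a → (Finsupp.single a b + u) s = u s := fun s hs => by
      simp [Ne.symm hs]
    have hu : ∀ s, 0 ≤ u s := fun s => by
      rcases eq_or_ne s a with rfl | hs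
      · exact hua.ge
      · exact hagree s hs ▸ hν s
    have hb₀ : 0 ≤ b := by simpa [hua] using hν a
    have ihu := ih hu fun s hs hs' => by
      have hs₁ := hlt (s + 1) (Finsupp.mem_support_iff.2 hs')
      exact hfg s (by rwa [hagree s (by omega)]) (by rwa [hagree (s + 1) (by omega)])
    have hprev : u (a - 1) ≤ u.mapDomain f (f a) ∨ u (a - 1) ≤ u.mapDomain g (g a) := by
      by_cases h₀ : u (a - 1) = 0
      · exact Or.inl (h₀ ▸ Finsupp.mapDomain_apply_nonneg hu f _)
      have hν₀ : (Finsupp.single a b + u) (a - 1) ≠ 0 := by rwa [hagree _ (by omega)]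
      have hν₁ : (Finsupp.single a b + u) a ≠ 0 := by simpa [hua] using hb
      rcases hfg (a - 1) hν₀ (by rwa [sub_add_cancel]) with h | h <;> rw [sub_add_cancel] at h
      · exact Or.inl (h ▸ Finsupp.le_mapDomain_apply hu f (a - 1))
      · exact Or.inr (h ▸ Finsupp.le_mapDomain_apply hu g (a - 1))
    simp only [Finsupp.mapDomain_add, Finsupp.mapDomain_single, relEntropy_single_add]
    have hhalves := mulLogIncrement_halves hlt b
    have hf₀ := Finsupp.mapDomain_apply_nonneg hu f (f a)
    have hg₀ := Finsupp.mapDomain_apply_nonneg hu g (g a)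
    rcases hprev with h | h
    · linarith [mulLogIncrement_mono hb₀ (hu _) h, mulLogIncrement_mono hb₀ le_rfl hg₀]
    · linarith [mulLogIncrement_mono hb₀ (hu _) h, mulLogIncrement_mono hb₀ le_rfl hf₀]

theorem IsChain.le_of_fst_add_snd_le {s : Set (ℤ × ℤ)} (hs : IsChain (· ≤ ·) s) {p q : ℤ × ℤ}
    (hp : p ∈ s) (hq : q ∈ s) (hpq : p.1 + p.2 ≤ q.1 + q.2) : p ≤ q := by
  rcases eq_or_ne p q with rfl | hne
  · exact le_rfl
  refine (hs hp hq hne).resolve_right fun hqp => hne ?_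
  have := Prod.le_def.1 hqp
  exact Prod.ext (by omega) (by omega)

theorem relEntropy_mapDomain_midpoints_le (v : ℤ × ℤ →₀ ℝ) (hv : ∀ p, 0 ≤ v p)
    (hchain : IsChain (· ≤ ·) (v.support : Set (ℤ × ℤ))) :
    relEntropy ⇑(v.mapDomain fun p => (p.1 + p.2) / 2) +
        relEntropy ⇑(v.mapDomain fun p => (p.1 + p.2 + 1) / 2) ≤
      relEntropy ⇑(v.mapDomain Prod.fst) + relEntropy ⇑(v.mapDomain Prod.snd) := by
  classical
  set σ : ℤ × ℤ → ℤ := fun p => p.1 + p.2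
  have hinj : InjOn σ v.support := fun p hp q hq h =>
    le_antisymm (hchain.le_of_fst_add_snd_le hp hq h.le) (hchain.le_of_fst_add_snd_le hq hp h.ge)
  set ι := Function.invFunOn σ v.support
  have hι : ∀ p ∈ v.support, ι (σ p) = p := fun p hp => hinj.leftInvOn_invFunOn hp
  have hcoord : ∀ φ : ℤ × ℤ → ℤ, v.mapDomain φ = (v.mapDomain σ).mapDomain (φ ∘ ι) := by
    intro φ
    rw [← Finsupp.mapDomain_comp]
    exact Finsupp.mapDomain_congr fun p hp => by
      change φ p = φ (ι (σ p))
      rw [hι p hp]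
  have hmem : ∀ s, v.mapDomain σ s ≠ 0 → ∃ p ∈ v.support, σ p = s := fun s hs => by
    simpa using Finsupp.mapDomain_support (Finsupp.mem_support_iff.2 hs)
  have hstep : ∀ s, v.mapDomain σ s ≠ 0 → v.mapDomain σ (s + 1) ≠ 0 →
      (Prod.fst ∘ ι) s = (Prod.fst ∘ ι) (s + 1) ∨ (Prod.snd ∘ ι) s = (Prod.snd ∘ ι) (s + 1) := by
    intro s hs hs'
    obtain ⟨p, hp, rfl⟩ := hmem s hs
    obtain ⟨q, hq, hpq⟩ := hmem _ hs'
    have hsum : q.1 + q.2 = p.1 + p.2 + 1 := hpq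
    have hpq' := Prod.le_def.1 (hchain.le_of_fst_add_snd_le hp hq (by omega))
    simp only [Function.comp_apply, ← hpq, hι p hp, hι q hq]
    omega
  rw [hcoord Prod.fst, hcoord Prod.snd,
    show v.mapDomain (fun p => (p.1 + p.2) / 2) = (v.mapDomain σ).mapDomain (· / 2) from
      Finsupp.mapDomain_comp (f := σ) (g := (· / 2)),
    show v.mapDomain (fun p => (p.1 + p.2 + 1) / 2) = (v.mapDomain σ).mapDomain (fun s => (s + 1) / 2)
      from Finsupp.mapDomain_comp (f := σ) (g := fun s => (s + 1) / 2)]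
  exact relEntropy_mapDomain_halves_le (v.mapDomain σ) (Finsupp.mapDomain_apply_nonneg hv σ) _ _
    hstep

end Entropy

section Quantile

variable {μ : ℤ → ℝ}

theorem cdf_eq_sum (h : IsPMF μ) (x : ℤ) :
    cdf (· ≤ ·) μ x = ∑ g ∈ h.2.1.toFinset with g ≤ x, μ g :=
  finsum_mem_eq_sum_of_inter_support_eq _ (by ext; simp [and_comm])

theorem cdf_nonneg (h : IsPMF μ) (x : ℤ) : 0 ≤ cdf (· ≤ ·) μ x := by
  rw [cdf_eq_sum h]
  exact Finset.sum_nonneg fun g _ => h.1 g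

theorem cdf_mono (h : IsPMF μ) : Monotone (cdf (· ≤ ·) μ) := fun x y hxy => by
  rw [cdf_eq_sum h, cdf_eq_sum h]
  refine Finset.sum_le_sum_of_subset_of_nonneg (fun g => ?_) fun g _ _ => h.1 g
  simp only [Finset.mem_filter]
  exact fun hg => ⟨hg.1, hg.2.trans hxy⟩

theorem cdf_eq_one (h : IsPMF μ) {x : ℤ} (hx : ∀ g, μ g ≠ 0 → g ≤ x) : cdf (· ≤ ·) μ x = 1 := by
  rw [cdf_eq_sum h, Finset.filter_true_of_mem fun g hg => hx g (h.2.1.mem_toFinset.1 hg),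
    ← finsum_eq_sum μ h.2.1, h.2.2]

theorem cdf_le_one (h : IsPMF μ) (x : ℤ) : cdf (· ≤ ·) μ x ≤ 1 := by
  obtain ⟨M, hM⟩ := h.2.1.bddAbove
  rw [← cdf_eq_one h (x := max x M) fun g hg => (hM hg).trans (le_max_right _ _)]
  exact cdf_mono h (le_max_left _ _)

theorem cdf_sub_one_add (h : IsPMF μ) (x : ℤ) :
    cdf (· ≤ ·) μ (x - 1) + μ x = cdf (· ≤ ·) μ x := by
  have hinsert : {g : ℤ | g ≤ x} = insert x {g | g ≤ x - 1} := by
    ext g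
    simp only [mem_ofPred_eq, mem_insert_iff]
    omega
  rw [cdf, cdf, hinsert, finsum_mem_insert' _ (by simp) (h.2.1.subset inter_subset_right),
    add_comm]

theorem genInv_eq_iff (h : IsPMF μ) {t : ℝ} (ht : t ∈ Ioc 0 1) (x : ℤ) :
    genInv (· ≤ ·) μ t = x ↔ cdf (· ≤ ·) μ (x - 1) < t ∧ t ≤ cdf (· ≤ ·) μ x := by
  obtain ⟨m, hm⟩ := h.2.1.bddBelow
  obtain ⟨M, hM⟩ := h.2.1.bddAbove
  have hex : ∃ x, t ≤ cdf (· ≤ ·) μ x ∧ ∀ y, t ≤ cdf (· ≤ ·) μ y → x ≤ y := by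
    refine Int.exists_least_of_bdd ⟨m, fun z hz => ?_⟩ ⟨M, ?_⟩
    · by_contra! hzm
      have : cdf (· ≤ ·) μ z = 0 := finsum_mem_eq_zero_of_forall_eq_zero fun g hg => by
        by_contra hg₀
        exact absurd ((hm hg₀).trans hg) (by simpa using hzm.not_ge)
      linarith [ht.1]
    · rw [cdf_eq_one h fun g hg => hM hg]
      exact ht.2
  have hleast : ∀ y, (t ≤ cdf (· ≤ ·) μ y ∧ ∀ z, t ≤ cdf (· ≤ ·) μ z → y ≤ z) ↔
      cdf (· ≤ ·) μ (y - 1) < t ∧ t ≤ cdf (· ≤ ·) μ y := by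
    refine fun y => ⟨fun hy => ⟨?_, hy.1⟩, fun hy => ⟨hy.2, fun z hz => ?_⟩⟩
    · by_contra! hy'
      linarith [hy.2 _ hy']
    · by_contra! hzy
      linarith [cdf_mono h (show z ≤ y - 1 by omega)]
  rw [genInv, dif_pos hex, ← hleast]
  exact ⟨fun e => e ▸ hex.choose_spec,
    fun hx => le_antisymm (hex.choose_spec.2 _ hx.1) (hx.2 _ hex.choose_spec.1)⟩

theorem genInv_monotoneOn (h : IsPMF μ) : MonotoneOn (genInv (· ≤ ·) μ) (Ioc 0 1) := by
  intro t ht t' ht' htt'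
  have hx := (genInv_eq_iff h ht _).1 rfl
  have hx' := (genInv_eq_iff h ht' _).1 rfl
  by_contra! hlt
  linarith [cdf_mono h (show genInv (· ≤ ·) μ t' ≤ genInv (· ≤ ·) μ t - 1 by omega)]

theorem genInv_apply_ne_zero (h : IsPMF μ) {t : ℝ} (ht : t ∈ Ioc 0 1) :
    μ (genInv (· ≤ ·) μ t) ≠ 0 := fun h₀ => by
  have hx := (genInv_eq_iff h ht _).1 rfl
  linarith [cdf_sub_one_add h (genInv (· ≤ ·) μ t)]

theorem volume_genInv_preimage (h : IsPMF μ) (x : ℤ) :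
    (volume.restrict (Ioo (0 : ℝ) 1) (genInv (· ≤ ·) μ ⁻¹' {x})).toReal = μ x := by
  set a := cdf (· ≤ ·) μ (x - 1)
  set b := cdf (· ≤ ·) μ x
  have hab : a + μ x = b := cdf_sub_one_add h x
  have hlevel : genInv (· ≤ ·) μ ⁻¹' {x} ∩ Ioo 0 1 = Ioc a b ∩ Ioo 0 1 := by
    ext t
    simp only [mem_inter_iff, mem_preimage, mem_singleton_iff, mem_Ioc,
      and_congr_left_iff]
    exact fun ht => genInv_eq_iff h (Ioo_subset_Ioc_self ht) x
  -- The level set lies between `Ioo a b` and `Ioc a b`, as `0 ≤ a` and `b ≤ 1`.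
  have hlower : Ioo a b ⊆ Ioc a b ∩ Ioo 0 1 := fun t ht =>
    ⟨Ioo_subset_Ioc_self ht, (cdf_nonneg h _).trans_lt ht.1, ht.2.trans_le (cdf_le_one h x)⟩
  have hvol : volume (Ioc a b ∩ Ioo 0 1) = ENNReal.ofReal (b - a) := le_antisymm
    ((measure_mono inter_subset_left).trans_eq Real.volume_Ioc)
    (Real.volume_Ioo.symm.trans_le (measure_mono hlower))
  rw [Measure.restrict_apply' measurableSet_Ioo, hlevel, hvol,
    ENNReal.toReal_ofReal (by linarith [h.1 x])]
  linarith

end Quantile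

theorem pushforward_toReal_measure_preimage {Ω A B : Type*} [MeasurableSpace Ω] [Countable A]
    (ρ : Measure Ω) [IsFiniteMeasure ρ] (G : Ω → A)
    (hG : ∀ p, NullMeasurableSet (G ⁻¹' {p}) ρ)
    (hfin : (Function.support fun p => (ρ (G ⁻¹' {p})).toReal).Finite) (f : A → B) :
    pushforward f (fun p => (ρ (G ⁻¹' {p})).toReal) = fun z => (ρ ((f ∘ G) ⁻¹' {z})).toReal := by
  classical
  ext z
  set P := hfin.toFinset.filter (f · = z)
  have hnull : ρ (G ⁻¹' (↑hfin.toFinset)ᶜ) = 0 := by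
    refine (measure_preimage_eq_zero_iff_of_countable (to_countable _)).2 fun p hp => ?_
    exact ((ENNReal.toReal_eq_zero_iff _).1 (by simpa using hp)).resolve_right (measure_ne_top ρ _)
  have hcover : (f ∘ G) ⁻¹' {z} ⊆ G ⁻¹' ↑P ∪ G ⁻¹' (↑hfin.toFinset)ᶜ := fun t ht => by
    by_cases hGt : G t ∈ hfin.toFinset
    · exact Or.inl (Finset.mem_coe.2 (Finset.mem_filter.2 ⟨hGt, ht⟩))
    · exact Or.inr hGt
  have hfiber : ρ ((f ∘ G) ⁻¹' {z}) = ρ (G ⁻¹' ↑P) := le_antisymm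
    ((measure_mono hcover).trans ((measure_union_le _ _).trans_eq (by rw [hnull, add_zero])))
    (measure_mono fun t ht => by simpa [P] using (Finset.mem_filter.1 ht).2)
  have hunion : G ⁻¹' ↑P = ⋃ p ∈ P, G ⁻¹' {p} := by ext; simp
  rw [pushforward, finsum_mem_eq_sum_of_inter_support_eq _ (t := P) (by ext; simp [P, and_comm]),
    hfiber, hunion, measure_biUnion_finset₀
      (fun p _ q _ hpq => (Disjoint.preimage G (disjoint_singleton.2 hpq)).aedisjoint)
      fun p _ => hG p, ENNReal.toReal_sum fun p _ => measure_ne_top ρ _]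

section MonotoneCoupling

variable {μ₁ μ₂ : ℤ → ℝ}

noncomputable def quantilePair (μ₁ μ₂ : ℤ → ℝ) (t : ℝ) : ℤ × ℤ :=
  (genInv (· ≤ ·) μ₁ t, genInv (· ≤ ·) μ₂ t)

theorem monotoneCoupling_eq (μ₁ μ₂ : ℤ → ℝ) :
    monotoneCoupling (· ≤ ·) μ₁ μ₂ =
      fun p => (volume.restrict (Ioo (0 : ℝ) 1) (quantilePair μ₁ μ₂ ⁻¹' {p})).toReal := by
  ext p
  simp only [monotoneCoupling, quantilePair, preimage, mem_singleton_iff, Prod.ext_iff]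

theorem quantilePair_monotoneOn (h₁ : IsPMF μ₁) (h₂ : IsPMF μ₂) :
    MonotoneOn (quantilePair μ₁ μ₂) (Ioc 0 1) := fun _ ht _ ht' htt' =>
  ⟨genInv_monotoneOn h₁ ht ht' htt', genInv_monotoneOn h₂ ht ht' htt'⟩

theorem exists_quantilePair_eq {p : ℤ × ℤ}
    (hp : monotoneCoupling (· ≤ ·) μ₁ μ₂ p ≠ 0) :
    ∃ t ∈ Ioc (0 : ℝ) 1, quantilePair μ₁ μ₂ t = p := by
  simp only [monotoneCoupling_eq, Measure.restrict_apply' measurableSet_Ioo] at hp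
  obtain ⟨t, htp, ht⟩ := nonempty_of_measure_ne_zero (ENNReal.toReal_ne_zero.1 hp).1
  exact ⟨t, Ioo_subset_Ioc_self ht, htp⟩

theorem support_monotoneCoupling_finite (h₁ : IsPMF μ₁) (h₂ : IsPMF μ₂) :
    (Function.support (monotoneCoupling (· ≤ ·) μ₁ μ₂)).Finite := by
  refine (h₁.2.1.prod h₂.2.1).subset fun p hp => ?_
  obtain ⟨t, ht, rfl⟩ := exists_quantilePair_eq hp
  exact ⟨genInv_apply_ne_zero h₁ ht, genInv_apply_ne_zero h₂ ht⟩

theorem isChain_support_monotoneCoupling (h₁ : IsPMF μ₁) (h₂ : IsPMF μ₂) :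
    IsChain (· ≤ ·) (Function.support (monotoneCoupling (· ≤ ·) μ₁ μ₂)) := by
  intro p hp q hq _
  obtain ⟨t, ht, rfl⟩ := exists_quantilePair_eq hp
  obtain ⟨t', ht', rfl⟩ := exists_quantilePair_eq hq
  rcases le_total t t' with htt' | htt'
  · exact Or.inl (quantilePair_monotoneOn h₁ h₂ ht ht' htt')
  · exact Or.inr (quantilePair_monotoneOn h₁ h₂ ht' ht htt')

theorem pushforward_monotoneCoupling (h₁ : IsPMF μ₁) (h₂ : IsPMF μ₂) (f : ℤ × ℤ → ℤ) :
    pushforward f (monotoneCoupling (· ≤ ·) μ₁ μ₂) = fun z =>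
      (volume.restrict (Ioo (0 : ℝ) 1) ((f ∘ quantilePair μ₁ μ₂) ⁻¹' {z})).toReal := by
  have hmeas {μ : ℤ → ℝ} (h : IsPMF μ) :
      AEMeasurable (genInv (· ≤ ·) μ) (volume.restrict (Ioo (0 : ℝ) 1)) :=
    aemeasurable_restrict_of_monotoneOn measurableSet_Ioo
      ((genInv_monotoneOn h).mono Ioo_subset_Ioc_self)
  rw [monotoneCoupling_eq]
  exact pushforward_toReal_measure_preimage _ _
    (fun p => ((hmeas h₁).prodMk (hmeas h₂)).nullMeasurableSet_preimage (measurableSet_singleton p))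
    (monotoneCoupling_eq μ₁ μ₂ ▸ support_monotoneCoupling_finite h₁ h₂) f

theorem pushforward_fst_monotoneCoupling (h₁ : IsPMF μ₁) (h₂ : IsPMF μ₂) :
    pushforward Prod.fst (monotoneCoupling (· ≤ ·) μ₁ μ₂) = μ₁ := by
  rw [pushforward_monotoneCoupling h₁ h₂]
  exact funext (volume_genInv_preimage h₁)

theorem pushforward_snd_monotoneCoupling (h₁ : IsPMF μ₁) (h₂ : IsPMF μ₂) :
    pushforward Prod.snd (monotoneCoupling (· ≤ ·) μ₁ μ₂) = μ₂ := by
  rw [pushforward_monotoneCoupling h₁ h₂]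
  exact funext (volume_genInv_preimage h₂)

end MonotoneCoupling

/-- **Theorem 8 of Gozlan–Roberto–Samson–Tetali.** If `π` is the monotone coupling of two
finitely supported probability measures `μ₁, μ₂` on `ℤ` and `μ∓` are the push-forwards of
`π` by `(x,y) ↦ ⌊(x+y)/2⌋` and `(x,y) ↦ ⌈(x+y)/2⌉`, then
`H(μ₁|m) + H(μ₂|m) ≥ H(μ₋|m) + H(μ₊|m)`. -/
theorem entropy_midpoint_int (μ₁ μ₂ : ℤ → ℝ) (h₁ : IsPMF μ₁) (h₂ : IsPMF μ₂) :
    relEntropy μ₁ + relEntropy μ₂ ≥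
      relEntropy (pushforward (fun p : ℤ × ℤ => ⌊((p.1 + p.2 : ℤ) : ℚ) / 2⌋)
        (monotoneCoupling (· ≤ ·) μ₁ μ₂)) +
      relEntropy (pushforward (fun p : ℤ × ℤ => ⌈((p.1 + p.2 : ℤ) : ℚ) / 2⌉)
        (monotoneCoupling (· ≤ ·) μ₁ μ₂)) := by
  set v := Finsupp.ofSupportFinite _ (support_monotoneCoupling_finite h₁ h₂)
  have hv : ⇑v = monotoneCoupling (· ≤ ·) μ₁ μ₂ := Finsupp.ofSupportFinite_coe
  have hfloor : (fun p : ℤ × ℤ => ⌊((p.1 + p.2 : ℤ) : ℚ) / 2⌋) = fun p => (p.1 + p.2) / 2 :=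
    funext fun p => by exact_mod_cast Rat.floor_intCast_div_natCast (p.1 + p.2) 2
  have hceil : (fun p : ℤ × ℤ => ⌈((p.1 + p.2 : ℤ) : ℚ) / 2⌉) = fun p => (p.1 + p.2 + 1) / 2 :=
    funext fun p => by
      rw [← Nat.cast_ofNat, Rat.ceil_intCast_div_natCast]
      omega
  have hfst : relEntropy μ₁ = relEntropy ⇑(v.mapDomain Prod.fst) := by
    rw [← pushforward_coe, hv, pushforward_fst_monotoneCoupling h₁ h₂]
  have hsnd : relEntropy μ₂ = relEntropy ⇑(v.mapDomain Prod.snd) := by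
    rw [← pushforward_coe, hv, pushforward_snd_monotoneCoupling h₁ h₂]
  rw [hfst, hsnd, hfloor, hceil, ← hv, pushforward_coe, pushforward_coe]
  refine relEntropy_mapDomain_midpoints_le v (fun _ => ENNReal.toReal_nonneg) ?_
  rw [← Finsupp.fun_support_eq, hv]
  exact isChain_support_monotoneCoupling h₁ h₂
end

section
/- Let α, β, γ, δ > 0 with max{α,β} ≤ min{γ,δ}, and let n ≥ 1. Suppose f, g, h, k : ℤⁿ → [0,∞) satisfy f(x)^α · g(y)^β ≤ h(x∧y)^γ · k(x∨y)^δ for all x, y ∈ ℤⁿ, where x∧y = (min(x₁,y₁),…,min(xₙ,yₙ)) and x∨y = (max(x₁,y₁),…,max(xₙ,yₙ)). Then (∑_{x∈ℤⁿ} f(x))^α · (∑_{x∈ℤⁿ} g(x))^β ≤ (∑_{x∈ℤⁿ} h(x))^γ · (∑_{x∈ℤⁿ} k(x))^δ, where the sums are taken in the extended nonnegative reals [0,∞]. -/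
open scoped ENNReal NNReal

/-!
With `p = max α β`, the `p`-th root of the hypothesis is a four functions inequality for
`f ^ (α / p)`, `g ^ (β / p)`, `h ^ (γ / p)`, `k ^ (δ / p)`, so the Ahlswede–Daykin theorem bounds
`(∑ f ^ (α / p)) (∑ g ^ (β / p))` by `(∑ h ^ (γ / p)) (∑ k ^ (δ / p))`. Since `α / p, β / p ≤ 1`
and `γ / p, δ / p ≥ 1`, the map `t ↦ t ^ q` is subadditive on the left and superadditive on the
right, which turns these sums of powers into powers of sums; raising back to the power `p` gives
the claim.
-/

namespace ENNReal

variable {ι : Type*} {p : ℝ}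

theorem sum_rpow_le_rpow_sum (s : Finset ι) (f : ι → ℝ≥0∞) (hp : 1 ≤ p) :
    ∑ i ∈ s, f i ^ p ≤ (∑ i ∈ s, f i) ^ p := by
  induction s using Finset.cons_induction with
  | empty => simp
  | cons a s ha ih =>
    rw [Finset.sum_cons, Finset.sum_cons]
    grw [ih]
    exact add_rpow_le_rpow_add _ _ hp

theorem rpow_sum_le_sum_rpow (s : Finset ι) (f : ι → ℝ≥0∞) (hp₀ : 0 < p) (hp₁ : p ≤ 1) :
    (∑ i ∈ s, f i) ^ p ≤ ∑ i ∈ s, f i ^ p := by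
  induction s using Finset.cons_induction with
  | empty => simp [hp₀]
  | cons a s ha ih =>
    rw [Finset.sum_cons, Finset.sum_cons]
    grw [← ih]
    exact rpow_add_le_add_rpow _ _ hp₀.le hp₁

theorem tsum_rpow_le_rpow_tsum (f : ι → ℝ≥0∞) (hp : 1 ≤ p) :
    ∑' i, f i ^ p ≤ (∑' i, f i) ^ p := by
  rw [ENNReal.tsum_eq_iSup_sum]
  refine iSup_le fun s => (sum_rpow_le_rpow_sum s f hp).trans ?_
  gcongr
  exact ENNReal.sum_le_tsum s

theorem rpow_tsum_le_tsum_rpow (f : ι → ℝ≥0∞) (hp₀ : 0 < p) (hp₁ : p ≤ 1) :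
    (∑' i, f i) ^ p ≤ ∑' i, f i ^ p := by
  rw [← le_rpow_inv_iff hp₀, ENNReal.tsum_eq_iSup_sum]
  refine iSup_le fun s => (le_rpow_inv_iff hp₀).2 ?_
  exact (rpow_sum_le_sum_rpow s f hp₀ hp₁).trans (ENNReal.sum_le_tsum s)

theorem rpow_div_mul_rpow_div_rpow (x y : ℝ≥0∞) (a b : ℝ) (hp : 0 < p) :
    (x ^ (a / p) * y ^ (b / p)) ^ p = x ^ a * y ^ b := by
  rw [mul_rpow_of_nonneg _ _ hp.le, ← rpow_mul, ← rpow_mul,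
    div_mul_cancel₀ _ hp.ne', div_mul_cancel₀ _ hp.ne']

end ENNReal

open scoped FinsetFamily in
theorem four_functions_theorem_tsum {L : Type*} [DistribLattice L] (f₁ f₂ f₃ f₄ : L → ℝ≥0)
    (h : ∀ a b, f₁ a * f₂ b ≤ f₃ (a ⊓ b) * f₄ (a ⊔ b)) :
    (∑' a, (f₁ a : ℝ≥0∞)) * ∑' a, (f₂ a : ℝ≥0∞) ≤
      (∑' a, (f₃ a : ℝ≥0∞)) * ∑' a, (f₄ a : ℝ≥0∞) := by
  classical
  simp_rw [ENNReal.tsum_eq_iSup_sum (f := fun a => (f₁ a : ℝ≥0∞)),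
    ENNReal.tsum_eq_iSup_sum (f := fun a => (f₂ a : ℝ≥0∞)), ENNReal.iSup_mul, ENNReal.mul_iSup]
  refine iSup₂_le fun s t => ?_
  have hfin := four_functions_theorem f₁ f₂ f₃ f₄ (fun _ => zero_le) (fun _ => zero_le)
    (fun _ => zero_le) (fun _ => zero_le) h s t
  calc (∑ a ∈ s, (f₁ a : ℝ≥0∞)) * ∑ a ∈ t, (f₂ a : ℝ≥0∞)
      ≤ (∑ a ∈ s ⊼ t, (f₃ a : ℝ≥0∞)) * ∑ a ∈ s ⊻ t, (f₄ a : ℝ≥0∞) := by exact_mod_cast hfin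
    _ ≤ _ := by gcongr <;> exact ENNReal.sum_le_tsum _

theorem weighted_four_functions_theorem_tsum {L : Type*} [DistribLattice L]
    {α β γ δ : ℝ} (hα : 0 < α) (hβ : 0 < β) (hmix : max α β ≤ min γ δ)
    (f g h k : L → ℝ≥0) (hyp : ∀ a b, f a ^ α * g b ^ β ≤ h (a ⊓ b) ^ γ * k (a ⊔ b) ^ δ) :
    (∑' a, (f a : ℝ≥0∞)) ^ α * (∑' a, (g a : ℝ≥0∞)) ^ β ≤
      (∑' a, (h a : ℝ≥0∞)) ^ γ * (∑' a, (k a : ℝ≥0∞)) ^ δ := by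
  set p := max α β
  have hp : 0 < p := lt_max_of_lt_left hα
  have hγ : 1 ≤ γ / p := (one_le_div hp).2 (hmix.trans (min_le_left _ _))
  have hδ : 1 ≤ δ / p := (one_le_div hp).2 (hmix.trans (min_le_right _ _))
  have hroot : ∀ a b, f a ^ (α / p) * g b ^ (β / p) ≤
      h (a ⊓ b) ^ (γ / p) * k (a ⊔ b) ^ (δ / p) := fun a b => by
    have := NNReal.rpow_le_rpow (hyp a b) (inv_pos.2 hp).le
    simpa only [NNReal.mul_rpow, ← NNReal.rpow_mul, div_eq_mul_inv] using this
  have hcoe : ∀ (u : L → ℝ≥0) {q : ℝ}, 0 ≤ q →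
      ∑' a, ((u a ^ q : ℝ≥0) : ℝ≥0∞) = ∑' a, (u a : ℝ≥0∞) ^ q := fun u q hq => by
    simp only [ENNReal.coe_rpow_of_nonneg _ hq]
  have hfour := four_functions_theorem_tsum (f · ^ (α / p)) (g · ^ (β / p))
    (h · ^ (γ / p)) (k · ^ (δ / p)) hroot
  rw [hcoe f (by positivity), hcoe g (by positivity), hcoe h (by positivity),
    hcoe k (by positivity)] at hfour
  calc (∑' a, (f a : ℝ≥0∞)) ^ α * (∑' a, (g a : ℝ≥0∞)) ^ β
      = ((∑' a, (f a : ℝ≥0∞)) ^ (α / p) * (∑' a, (g a : ℝ≥0∞)) ^ (β / p)) ^ p :=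
        (ENNReal.rpow_div_mul_rpow_div_rpow _ _ _ _ hp).symm
    _ ≤ ((∑' a, (f a : ℝ≥0∞) ^ (α / p)) * ∑' a, (g a : ℝ≥0∞) ^ (β / p)) ^ p := by
        gcongr
        · exact ENNReal.rpow_tsum_le_tsum_rpow _ (by positivity)
            (div_le_one_of_le₀ (le_max_left _ _) hp.le)
        · exact ENNReal.rpow_tsum_le_tsum_rpow _ (by positivity)
            (div_le_one_of_le₀ (le_max_right _ _) hp.le)
    _ ≤ ((∑' a, (h a : ℝ≥0∞) ^ (γ / p)) * ∑' a, (k a : ℝ≥0∞) ^ (δ / p)) ^ p := by gcongr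
    _ ≤ ((∑' a, (h a : ℝ≥0∞)) ^ (γ / p) * (∑' a, (k a : ℝ≥0∞)) ^ (δ / p)) ^ p := by
        gcongr
        · exact ENNReal.tsum_rpow_le_rpow_tsum _ hγ
        · exact ENNReal.tsum_rpow_le_rpow_tsum _ hδ
    _ = (∑' a, (h a : ℝ≥0∞)) ^ γ * (∑' a, (k a : ℝ≥0∞)) ^ δ :=
        ENNReal.rpow_div_mul_rpow_div_rpow _ _ _ _ hp

-- In `Fin n → ℤ`, `x ⊓ y` and `x ⊔ y` unfold to the coordinatewise `min` and `max`.
theorem weighted_four_functions_general {n : ℕ} (α β γ δ : ℝ)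
    (hα : 0 < α) (hβ : 0 < β)
    (hmix : max α β ≤ min γ δ)
    (f g h k : (Fin n → ℤ) → ℝ≥0)
    (hyp : ∀ x y : Fin n → ℤ,
      f x ^ α * g y ^ β ≤
        h (fun i => min (x i) (y i)) ^ γ * k (fun i => max (x i) (y i)) ^ δ) :
    (∑' x, (f x : ℝ≥0∞)) ^ α * (∑' x, (g x : ℝ≥0∞)) ^ β ≤
      (∑' x, (h x : ℝ≥0∞)) ^ γ * (∑' x, (k x : ℝ≥0∞)) ^ δ :=
  weighted_four_functions_theorem_tsum hα hβ hmix f g h k hyp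

/-- **Weighted four functions theorem** (weighted Ahlswede–Daykin inequality on `ℤⁿ`). -/
theorem weighted_four_functions {n : ℕ} (hn : 1 ≤ n) (α β γ δ : ℝ)
    (hα : 0 < α) (hβ : 0 < β) (hγ : 0 < γ) (hδ : 0 < δ)
    (hmix : max α β ≤ min γ δ)
    (f g h k : (Fin n → ℤ) → ℝ≥0)
    (hyp : ∀ x y : Fin n → ℤ,
      f x ^ α * g y ^ β ≤
        h (fun i => min (x i) (y i)) ^ γ * k (fun i => max (x i) (y i)) ^ δ) :
    (∑' x, (f x : ℝ≥0∞)) ^ α * (∑' x, (g x : ℝ≥0∞)) ^ β ≤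
      (∑' x, (h x : ℝ≥0∞)) ^ γ * (∑' x, (k x : ℝ≥0∞)) ^ δ :=
  weighted_four_functions_general α β γ δ hα hβ hmix f g h k hyp
end

section
/- Let G be an abelian group equipped with a total additive ordering ⪯, and let T : G×G → G be translation equivariant and nondecreasing in each argument with respect to ⪯. Then the complementing operation T₊(x,y) = x + y − T(x,y) is also translation equivariant and nondecreasing in each argument with respect to ⪯; that is, x₁ ⪯ x₂ and y₁ ⪯ y₂ imply x₁ + y₁ − T(x₁,y₁) ⪯ x₂ + y₂ − T(x₂,y₂). -/
open scoped BigOperators ENNReal NNReal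

/-- If `T` is translation equivariant and nondecreasing in each argument with respect to a
total additive ordering, then so is its complementing operation `T₊(x,y) = x + y - T(x,y)`. -/
theorem complement_translation_equivariant_and_monotone
    {G : Type*} [AddCommGroup G] (r : G → G → Prop)
    (hr : TotalAdditiveOrdering r)
    (T : G → G → G) (hTE : TranslationEquivariant T)
    (hmono : ∀ x₁ x₂ y₁ y₂, r x₁ x₂ → r y₁ y₂ → r (T x₁ y₁) (T x₂ y₂)) :
    TranslationEquivariant (fun x y => x + y - T x y) ∧
    ∀ x₁ x₂ y₁ y₂, r x₁ x₂ → r y₁ y₂ →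
      r (x₁ + y₁ - T x₁ y₁) (x₂ + y₂ - T x₂ y₂) := by
  obtain ⟨hrefl, hanti, htrans, htot, hadd⟩ := hr
  constructor
  · intro x y z
    show (x + z) + (y + z) - T (x + z) (y + z) = (x + y - T x y) + z
    rw [hTE]
    abel
  · intro x₁ x₂ y₁ y₂ hx hy
    set A := T x₁ y₁ with hA
    set B := T x₂ y₂ with hB
    set d := x₂ - x₁ with hd
    set e := y₂ - y₁ with he
    have hx2 : x₂ = x₁ + d := by rw [hd]; abel
    have hy2 : y₂ = y₁ + e := by rw [he]; abel
    have h0d : r 0 d := by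
      have := hadd _ _ (-x₁) hx
      have e1 : x₁ + -x₁ = 0 := by abel
      have e2 : x₂ + -x₁ = d := by rw [hd]; abel
      rwa [e1, e2] at this
    have h0e : r 0 e := by
      have := hadd _ _ (-y₁) hy
      have e1 : y₁ + -y₁ = 0 := by abel
      have e2 : y₂ + -y₁ = e := by rw [he]; abel
      rwa [e1, e2] at this
    -- key inequality: r B (A + d + e)
    have hkey : r B (A + d + e) := by
      rcases htot d e with hde | hed
      · have h1 : r (x₁ + d) (x₁ + e) := by
          have := hadd _ _ x₁ hde
          rwa [add_comm d x₁, add_comm e x₁] at this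
        have h2 : r (T (x₁ + d) (y₁ + e)) (T (x₁ + e) (y₁ + e)) :=
          hmono _ _ _ _ h1 (hrefl _)
        rw [hTE x₁ y₁ e, ← hx2, ← hy2, ← hA, ← hB] at h2
        have h3 : r (A + e) (A + e + d) := by
          have := hadd _ _ (A + e) h0d
          have e1 : (0 : G) + (A + e) = A + e := by abel
          have e2 : d + (A + e) = A + e + d := by abel
          rwa [e1, e2] at this
        have h4 := htrans _ _ _ h2 h3
        have e3 : A + e + d = A + d + e := by abel
        rwa [e3] at h4
      · have h1 : r (y₁ + e) (y₁ + d) := by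
          have := hadd _ _ y₁ hed
          rwa [add_comm e y₁, add_comm d y₁] at this
        have h2 : r (T (x₁ + d) (y₁ + e)) (T (x₁ + d) (y₁ + d)) :=
          hmono _ _ _ _ (hrefl _) h1
        rw [hTE x₁ y₁ d, ← hx2, ← hy2, ← hA, ← hB] at h2
        have h3 : r (A + d) (A + d + e) := by
          have := hadd _ _ (A + d) h0e
          have e1 : (0 : G) + (A + d) = A + d := by abel
          have e2 : e + (A + d) = A + d + e := by abel
          rwa [e1, e2] at this
        exact htrans _ _ _ h2 h3
    have hfin := hadd _ _ (x₁ + y₁ - A - B) hkey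
    have e1 : B + (x₁ + y₁ - A - B) = x₁ + y₁ - A := by abel
    have e2 : A + d + e + (x₁ + y₁ - A - B) = x₂ + y₂ - B := by
      rw [hd, he]; abel
    rwa [e1, e2] at hfin
end
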